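/- Fix N ≥ 2 and β ∈ ℝ, take β′ = β, let ρ^β := ρ_β⊗…⊗ρ_β (N factors), and let L_d(A) := L(A) − i[H_S,A] be the dissipative part of the two-bath Lindblad generator, i.e. L_d(A) = 2β₀(2σ₋^{(1)}Aσ₊^{(1)} − {n₋^{(1)},A}) + 2β₁(2σ₊^{(1)}Aσ₋^{(1)} − {n₊^{(1)},A}) + 2β₀(2σ₋^{(N)}Aσ₊^{(N)} − {n₋^{(N)},A}) + 2β₁(2σ₊^{(N)}Aσ₋^{(N)} − {n₊^{(N)},A}). Then the quantum detailed balance condition holds with respect to ρ^β: (i) H_S·ρ^β = ρ^β·H_S, and (ii) for all 2^N×2^N matrices A, B: Tr( ρ^β · (L_d(A))* · B ) = Tr( ρ^β · A* · L_d(B) ). -/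

import Mathlib

/-!
Every operator involved is a Kronecker product over the sites. The product state `ρ^β`
commutes with the diagonal site operators `σz`, `n₊`, `n₋`, and intertwines the ladder
operators with Boltzmann weights, `β₀ ρ^β σ₋ = β₁ σ₋ ρ^β` and `β₁ ρ^β σ₊ = β₀ σ₊ ρ^β`, at
every site. Since `σxσx + σyσy = 2(σ₊σ₋ + σ₋σ₊)`, the two weights cancel in each hopping
term, so `ρ^β` commutes with `H_S`. In `Tr(ρ^β L_d(A)* B)`, the same relations together with
cyclicity of the trace move the jump term `β₀ σ₋ X σ₊` to `β₁ σ₊ B σ₋` and vice versa, while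
the anticommutators move across because `n₊`, `n₋` commute with `ρ^β`.
-/

open Matrix Complex Filter
open scoped Kronecker Topology ComplexOrder

noncomputable section

/-- The `N`-spin configuration space index: `(ℂ²)^{⊗N}` is identified with
functions `Fin N → Fin 2 → ℂ`, so `2^N × 2^N` matrices are indexed by `Fin N → Fin 2`. -/
abbrev Spin (N : ℕ) := Fin N → Fin 2

def sx : Matrix (Fin 2) (Fin 2) ℂ := !![0, 1; 1, 0]
def sy : Matrix (Fin 2) (Fin 2) ℂ := !![0, -Complex.I; Complex.I, 0]
def sz : Matrix (Fin 2) (Fin 2) ℂ := !![1, 0; 0, -1]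
def sp : Matrix (Fin 2) (Fin 2) ℂ := !![0, 1; 0, 0]
def sm : Matrix (Fin 2) (Fin 2) ℂ := !![0, 0; 1, 0]
def np : Matrix (Fin 2) (Fin 2) ℂ := !![1, 0; 0, 0]
def nm : Matrix (Fin 2) (Fin 2) ℂ := !![0, 0; 0, 1]

/-- `M^{(k)} = I ⊗ ... ⊗ M ⊗ ... ⊗ I`: the 2×2 matrix `M` acting at site `k`
of the chain, under the iterated Kronecker identification. -/
def site {N : ℕ} (k : Fin N) (M : Matrix (Fin 2) (Fin 2) ℂ) :
    Matrix (Spin N) (Spin N) ℂ :=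
  Matrix.of fun x y => ∏ j : Fin N, if j = k then M (x j) (y j) else if x j = y j then 1 else 0

/-- The XY spin-chain Hamiltonian
`H_S = Σ_{k=1}^N σz^{(k)} + Σ_{k=1}^{N-1} (σx^{(k)}σx^{(k+1)} + σy^{(k)}σy^{(k+1)})`. -/
def HS (N : ℕ) : Matrix (Spin N) (Spin N) ℂ :=
  (∑ k : Fin N, site k sz) +
    ∑ k : Fin N, ∑ l : Fin N,
      if (l : ℕ) = (k : ℕ) + 1 then site k sx * site l sx + site k sy * site l sy else 0

/-- `β₀ = e^{-β}/(e^{-β}+e^{β})`. -/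
def b0 (β : ℝ) : ℝ := Real.exp (-β) / (Real.exp (-β) + Real.exp β)

/-- `β₁ = e^{β}/(e^{-β}+e^{β})`. -/
def b1 (β : ℝ) : ℝ := Real.exp β / (Real.exp (-β) + Real.exp β)

/-- The single-spin Gibbs state `ρ_β = diag(β₀, β₁)`. -/
def rhoB (β : ℝ) : Matrix (Fin 2) (Fin 2) ℂ := !![(b0 β : ℂ), 0; 0, (b1 β : ℂ)]

/-- Heisenberg-picture dissipator at site `k`, inverse temperature `β`:
`2β₀(2σ₋^{(k)}Xσ₊^{(k)} − {n₋^{(k)},X}) + 2β₁(2σ₊^{(k)}Xσ₋^{(k)} − {n₊^{(k)},X})`. -/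
def dissAt {N : ℕ} (k : Fin N) (β : ℝ) (X : Matrix (Spin N) (Spin N) ℂ) :
    Matrix (Spin N) (Spin N) ℂ :=
  (2 * b0 β : ℂ) • (2 • (site k sm * X * site k sp) - (site k nm * X + X * site k nm)) +
    (2 * b1 β : ℂ) • (2 • (site k sp * X * site k sm) - (site k np * X + X * site k np))

/-- Schrödinger-picture (adjoint) dissipator at site `k`:
`2β₀(2σ₊^{(k)}ρσ₋^{(k)} − {n₋^{(k)},ρ}) + 2β₁(2σ₋^{(k)}ρσ₊^{(k)} − {n₊^{(k)},ρ})`. -/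
def dissStarAt {N : ℕ} (k : Fin N) (β : ℝ) (ρ : Matrix (Spin N) (Spin N) ℂ) :
    Matrix (Spin N) (Spin N) ℂ :=
  (2 * b0 β : ℂ) • (2 • (site k sp * ρ * site k sm) - (site k nm * ρ + ρ * site k nm)) +
    (2 * b1 β : ℂ) • (2 • (site k sm * ρ * site k sp) - (site k np * ρ + ρ * site k np))

/-- The two-bath Lindblad generator (Heisenberg picture), baths at sites `k` and `l`. -/
def Ltwo {N : ℕ} (k l : Fin N) (β β' : ℝ) (X : Matrix (Spin N) (Spin N) ℂ) :
    Matrix (Spin N) (Spin N) ℂ :=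
  Complex.I • (HS N * X - X * HS N) + dissAt k β X + dissAt l β' X

/-- The two-bath adjoint Lindblad generator, baths at sites `k` and `l`. -/
def LtwoStar {N : ℕ} (k l : Fin N) (β β' : ℝ) (ρ : Matrix (Spin N) (Spin N) ℂ) :
    Matrix (Spin N) (Spin N) ℂ :=
  (-Complex.I) • (HS N * ρ - ρ * HS N) + dissStarAt k β ρ + dissStarAt l β' ρ

/-- The `N`-fold Kronecker product `ρ_β ⊗ ... ⊗ ρ_β` under the iterated-Kronecker
identification. -/
def prodState (N : ℕ) (β : ℝ) : Matrix (Spin N) (Spin N) ℂ :=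
  Matrix.of fun x y => ∏ j : Fin N, rhoB β (x j) (y j)

/-- A density matrix: Hermitian positive semidefinite with trace 1. -/
def IsDensityMatrix {n : Type*} [Fintype n] [DecidableEq n] (ρ : Matrix n n ℂ) : Prop :=
  ρ.IsHermitian ∧ ρ.PosSemidef ∧ ρ.trace = 1


section KroneckerPi

variable {ι d R : Type*} [Fintype ι] [CommSemiring R]

def kroneckerPi (f : ι → Matrix d d R) : Matrix (ι → d) (ι → d) R :=
  Matrix.of fun x y => ∏ j, f j (x j) (y j)

theorem kroneckerPi_mul [DecidableEq ι] [Fintype d] (f g : ι → Matrix d d R) :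
    kroneckerPi f * kroneckerPi g = kroneckerPi (f * g) := by
  ext x y
  simp only [kroneckerPi, mul_apply, of_apply, Pi.mul_apply, Fintype.prod_sum]
  exact Finset.sum_congr rfl fun z _ => Finset.prod_mul_distrib.symm

theorem kroneckerPi_conjTranspose [StarRing R] (f : ι → Matrix d d R) :
    (kroneckerPi f)ᴴ = kroneckerPi fun j => (f j)ᴴ := by
  ext x y
  simp only [kroneckerPi, conjTranspose_apply, of_apply, star_prod]

variable [DecidableEq ι]

theorem kroneckerPi_update_apply (f : ι → Matrix d d R) (k : ι) (M : Matrix d d R)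
    (x y : ι → d) :
    kroneckerPi (Function.update f k M) x y =
      M (x k) (y k) * ∏ j ∈ Finset.univ.erase k, f j (x j) (y j) := by
  rw [kroneckerPi, of_apply, ← Finset.mul_prod_erase _ _ (Finset.mem_univ k),
    Function.update_self]
  congr 1
  exact Finset.prod_congr rfl fun j hj => by rw [Function.update_of_ne (Finset.ne_of_mem_erase hj)]

theorem kroneckerPi_update_add (f : ι → Matrix d d R) (k : ι) (M M' : Matrix d d R) :
    kroneckerPi (Function.update f k (M + M')) =
      kroneckerPi (Function.update f k M) + kroneckerPi (Function.update f k M') := by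
  ext x y
  simp only [Matrix.add_apply, kroneckerPi_update_apply, add_mul]

theorem kroneckerPi_update_smul (f : ι → Matrix d d R) (k : ι) (c : R) (M : Matrix d d R) :
    kroneckerPi (Function.update f k (c • M)) = c • kroneckerPi (Function.update f k M) := by
  ext x y
  simp only [Matrix.smul_apply, kroneckerPi_update_apply, smul_eq_mul, mul_assoc]

theorem smul_kroneckerPi_mul_update_one [Fintype d] [DecidableEq d] {f : ι → Matrix d d R} {k : ι}
    {M : Matrix d d R} {a b : R} (h : a • (f k * M) = b • (M * f k)) :
    a • (kroneckerPi f * kroneckerPi (Function.update 1 k M)) =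
      b • (kroneckerPi (Function.update 1 k M) * kroneckerPi f) := by
  have hfM : f * Function.update (1 : ι → Matrix d d R) k M = Function.update f k (f k * M) := by
    funext j; by_cases hj : j = k <;> simp [hj]
  have hMf : Function.update (1 : ι → Matrix d d R) k M * f = Function.update f k (M * f k) := by
    funext j; by_cases hj : j = k <;> simp [hj]
  rw [kroneckerPi_mul, kroneckerPi_mul, hfM, hMf, ← kroneckerPi_update_smul,
    ← kroneckerPi_update_smul, h]

end KroneckerPi

theorem commute_mul_of_smul_mul_eq {K A : Type*} [Field K] [Ring A] [Algebra K A] {P X Y : A}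
    {a b : K} (ha : a ≠ 0) (hb : b ≠ 0) (hX : a • (P * X) = b • (X * P))
    (hY : b • (P * Y) = a • (Y * P)) : Commute P (X * Y) := by
  apply smul_right_injective A (mul_ne_zero ha hb)
  calc (a * b) • (P * (X * Y)) = b • ((a • (P * X)) * Y) := by
        rw [smul_mul_assoc, smul_smul, mul_comm b a, mul_assoc]
    _ = b • (X * (b • (P * Y))) := by rw [hX, smul_mul_assoc, mul_smul_comm, mul_assoc]
    _ = (a * b) • (X * Y * P) := by rw [hY, mul_smul_comm, smul_smul, mul_comm b a, mul_assoc]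

section Trace

variable {n R : Type*} [Fintype n] [CommRing R] {P : Matrix n n R}

theorem trace_mul_sandwich_mul {L : Matrix n n R} {a b : R} (h : a • (P * L) = b • (L * P))
    (L' X B : Matrix n n R) :
    a * (P * (L * X * L') * B).trace = b * (P * X * (L' * B * L)).trace := by
  calc a * (P * (L * X * L') * B).trace = ((a • (P * L)) * (X * L' * B)).trace := by
        rw [smul_mul_assoc, trace_smul, smul_eq_mul]; simp only [mul_assoc]
    _ = b * (L * (P * X * L' * B)).trace := by
        rw [h, smul_mul_assoc, trace_smul, smul_eq_mul]; simp only [mul_assoc]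
    _ = b * (P * X * (L' * B * L)).trace := by rw [trace_mul_comm]; simp only [mul_assoc]

theorem trace_mul_anticommutator {K : Matrix n n R} (h : Commute P K) (X B : Matrix n n R) :
    (P * (K * X + X * K) * B).trace = (P * X * (K * B + B * K)).trace := by
  have hKX : (P * (K * X) * B).trace = (P * X * (B * K)).trace := by
    rw [← mul_assoc, h.eq, mul_assoc K, mul_assoc K, trace_mul_comm K]; simp only [mul_assoc]
  have hXK : (P * (X * K) * B).trace = (P * X * (K * B)).trace := by simp only [mul_assoc]
  rw [mul_add, add_mul, trace_add, hKX, hXK, mul_add, trace_add, add_comm]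

theorem trace_mul_dissipator_symm {L L' K K' : Matrix n n R} {α γ : R}
    (hL : α • (P * L) = γ • (L * P)) (hL' : γ • (P * L') = α • (L' * P))
    (hK : Commute P K) (hK' : Commute P K') (X B : Matrix n n R) :
    (P * (α • (2 • (L * X * L') - (K * X + X * K)) +
        γ • (2 • (L' * X * L) - (K' * X + X * K'))) * B).trace =
      (P * X * (α • (2 • (L * B * L') - (K * B + B * K)) +
        γ • (2 • (L' * B * L) - (K' * B + B * K')))).trace := by
  have jL := trace_mul_sandwich_mul hL L' X B
  have jL' := trace_mul_sandwich_mul hL' L X B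
  have aK := trace_mul_anticommutator hK X B
  have aK' := trace_mul_anticommutator hK' X B
  simp only [mul_add, add_mul, mul_sub, sub_mul, mul_smul_comm, smul_mul_assoc, trace_add,
    trace_sub, trace_smul, smul_eq_mul, nsmul_eq_mul] at aK aK' ⊢
  linear_combination 2 * jL + 2 * jL' - α * aK - γ * aK'

end Trace

section SingleSpin

variable (β : ℝ)

theorem b0_pos : 0 < b0 β := by unfold b0; positivity

theorem b1_pos : 0 < b1 β := by unfold b1; positivity

theorem rhoB_mul_sm : (b0 β : ℂ) • (rhoB β * sm) = (b1 β : ℂ) • (sm * rhoB β) := by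
  ext i j; fin_cases i <;> fin_cases j <;> simp [rhoB, sm, mul_comm]

theorem rhoB_mul_sp : (b1 β : ℂ) • (rhoB β * sp) = (b0 β : ℂ) • (sp * rhoB β) := by
  ext i j; fin_cases i <;> fin_cases j <;> simp [rhoB, sp, mul_comm]

theorem commute_rhoB_sz : Commute (rhoB β) sz := by
  rw [commute_iff_eq]; ext i j; fin_cases i <;> fin_cases j <;> simp [rhoB, sz, mul_apply]

theorem commute_rhoB_nm : Commute (rhoB β) nm := by
  rw [commute_iff_eq]; ext i j; fin_cases i <;> fin_cases j <;> simp [rhoB, nm, mul_apply]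

theorem commute_rhoB_np : Commute (rhoB β) np := by
  rw [commute_iff_eq]; ext i j; fin_cases i <;> fin_cases j <;> simp [rhoB, np, mul_apply]

end SingleSpin

theorem sx_eq_sp_add_sm : sx = sp + sm := by
  ext i j; fin_cases i <;> fin_cases j <;> simp [sx, sp, sm]

theorem sy_eq_smul_sp_add_smul_sm : sy = (-I) • sp + I • sm := by
  ext i j; fin_cases i <;> fin_cases j <;> simp [sy, sp, sm]

theorem sm_conjTranspose : smᴴ = sp := by
  ext i j; fin_cases i <;> fin_cases j <;> simp [sm, sp]

theorem sp_conjTranspose : spᴴ = sm := by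
  ext i j; fin_cases i <;> fin_cases j <;> simp [sm, sp]

theorem nm_conjTranspose : nmᴴ = nm := by
  ext i j; fin_cases i <;> fin_cases j <;> simp [nm]

theorem np_conjTranspose : npᴴ = np := by
  ext i j; fin_cases i <;> fin_cases j <;> simp [np]

section SpinChain

variable {N : ℕ} (β : ℝ)

theorem site_eq_kroneckerPi (k : Fin N) (M : Matrix (Fin 2) (Fin 2) ℂ) :
    site k M = kroneckerPi (Function.update 1 k M) := by
  ext x y
  simp only [site, kroneckerPi, of_apply]
  refine Finset.prod_congr rfl fun j _ => ?_
  by_cases hj : j = k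
  · subst hj; simp
  · simp [hj, one_apply]

theorem prodState_eq_kroneckerPi : prodState N β = kroneckerPi fun _ => rhoB β := rfl

theorem site_add (k : Fin N) (M M' : Matrix (Fin 2) (Fin 2) ℂ) :
    site k (M + M') = site k M + site k M' := by
  simp only [site_eq_kroneckerPi, kroneckerPi_update_add]

theorem site_smul (k : Fin N) (c : ℂ) (M : Matrix (Fin 2) (Fin 2) ℂ) :
    site k (c • M) = c • site k M := by
  simp only [site_eq_kroneckerPi, kroneckerPi_update_smul]

theorem site_conjTranspose (k : Fin N) (M : Matrix (Fin 2) (Fin 2) ℂ) :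
    (site k M)ᴴ = site k Mᴴ := by
  rw [site_eq_kroneckerPi, site_eq_kroneckerPi, kroneckerPi_conjTranspose]
  congr 1
  funext j
  by_cases hj : j = k <;> simp [hj]

theorem smul_prodState_mul_site {k : Fin N} {M : Matrix (Fin 2) (Fin 2) ℂ} {a b : ℂ}
    (h : a • (rhoB β * M) = b • (M * rhoB β)) :
    a • (prodState N β * site k M) = b • (site k M * prodState N β) := by
  rw [prodState_eq_kroneckerPi, site_eq_kroneckerPi]
  exact smul_kroneckerPi_mul_update_one h

theorem commute_prodState_site {k : Fin N} {M : Matrix (Fin 2) (Fin 2) ℂ}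
    (h : Commute (rhoB β) M) : Commute (prodState N β) (site k M) := by
  have h' := smul_prodState_mul_site β (k := k) (M := M) (a := 1) (b := 1)
    (by rw [one_smul, one_smul, h.eq])
  rwa [one_smul, one_smul] at h'

theorem commute_prodState_site_mul_site {k l : Fin N} {M M' : Matrix (Fin 2) (Fin 2) ℂ}
    {a b : ℂ} (ha : a ≠ 0) (hb : b ≠ 0) (hM : a • (rhoB β * M) = b • (M * rhoB β))
    (hM' : b • (rhoB β * M') = a • (M' * rhoB β)) :
    Commute (prodState N β) (site k M * site l M') :=
  commute_mul_of_smul_mul_eq ha hb (smul_prodState_mul_site β hM) (smul_prodState_mul_site β hM')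

theorem site_hopping_eq (k l : Fin N) :
    site k sx * site l sx + site k sy * site l sy =
      (2 : ℂ) • (site k sp * site l sm + site k sm * site l sp) := by
  simp only [sx_eq_sp_add_sm, sy_eq_smul_sp_add_smul_sm, site_add, site_smul, add_mul, mul_add,
    smul_mul_assoc, mul_smul_comm]
  match_scalars <;> norm_num

theorem commute_prodState_HS : Commute (prodState N β) (HS N) := by
  have hb0 : (b0 β : ℂ) ≠ 0 := ofReal_ne_zero.mpr (b0_pos β).ne'
  have hb1 : (b1 β : ℂ) ≠ 0 := ofReal_ne_zero.mpr (b1_pos β).ne'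
  refine (Commute.sum_right _ _ _ fun k _ => commute_prodState_site β (commute_rhoB_sz β)).add_right
    (Commute.sum_right _ _ _ fun k _ => Commute.sum_right _ _ _ fun l _ => ?_)
  split_ifs
  · rw [site_hopping_eq]
    exact ((commute_prodState_site_mul_site β hb1 hb0 (rhoB_mul_sp β) (rhoB_mul_sm β)).add_right
      (commute_prodState_site_mul_site β hb0 hb1 (rhoB_mul_sm β) (rhoB_mul_sp β))).smul_right _
  · exact Commute.zero_right _

theorem dissAt_conjTranspose (k : Fin N) (A : Matrix (Spin N) (Spin N) ℂ) :
    (dissAt k β A)ᴴ = dissAt k β Aᴴ := by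
  simp only [dissAt, conjTranspose_add, conjTranspose_sub, conjTranspose_smul,
    conjTranspose_mul, site_conjTranspose, sm_conjTranspose,
    sp_conjTranspose, nm_conjTranspose, np_conjTranspose, star_mul', star_ofNat,
    Complex.star_def, conj_ofReal, mul_assoc]
  rw [add_comm (Aᴴ * site k nm), add_comm (Aᴴ * site k np)]

theorem trace_prodState_mul_dissAt (k : Fin N) (X B : Matrix (Spin N) (Spin N) ℂ) :
    (prodState N β * dissAt k β X * B).trace = (prodState N β * X * dissAt k β B).trace :=
  trace_mul_dissipator_symm
    (smul_prodState_mul_site β (by rw [mul_smul, mul_smul, rhoB_mul_sm]))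
    (smul_prodState_mul_site β (by rw [mul_smul, mul_smul, rhoB_mul_sp]))
    (commute_prodState_site β (commute_rhoB_nm β)) (commute_prodState_site β (commute_rhoB_np β))
    X B

end SpinChain

/-- Quantum detailed balance at equal temperatures: `[H_S, ρ^β] = 0` and the
dissipative part `L_d = dissAt 1 β + dissAt N β` is symmetric for the
scalar product `⟨A,B⟩ = Tr(ρ^β A* B)`. -/
theorem quantum_detailed_balance (N : ℕ) (hN : 2 ≤ N) (β : ℝ) :
    HS N * prodState N β = prodState N β * HS N ∧
      ∀ A B : Matrix (Spin N) (Spin N) ℂ,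
        (prodState N β *
            (dissAt (⟨0, by omega⟩ : Fin N) β A + dissAt (⟨N - 1, by omega⟩ : Fin N) β A)ᴴ *
            B).trace =
          (prodState N β * Aᴴ *
            (dissAt (⟨0, by omega⟩ : Fin N) β B +
              dissAt (⟨N - 1, by omega⟩ : Fin N) β B)).trace := by
  refine ⟨(commute_prodState_HS β).symm.eq, fun A B => ?_⟩
  rw [conjTranspose_add, dissAt_conjTranspose, dissAt_conjTranspose, mul_add, add_mul, trace_add,
    trace_prodState_mul_dissAt, trace_prodState_mul_dissAt, ← trace_add, ← mul_add]
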